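/- Let σ ∈ S_n and i ∈ [n] be such that σ([i-1]) = [i-1] and σ(i) ≥ j := σ^{-1}(i) > i, and let σ' = σ T_{j-1,j}. Then every transposition Bruhat-below σ' is Bruhat-below σ; T_{i,j} is Bruhat-below σ but not below σ'; and σ is smooth if and only if σ' is smooth and {transpositions ≤ σ} = {transpositions ≤ σ'} ∪ {T_{i,j}}. -/

import Mathlib

/-!
Put `σ' = σ * (j' j)`. As `σ` preserves `[0, i)`, `σ j' > i = σ j`, so `j'` is a descent of `σ`:
`σ' ≤ σ` and `ℓ(σ) = ℓ(σ') + 1`. Transpositions are tested with the criterion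
`(a b) ≤ w ↔ b ≤ max w[0, a] ∧ b ≤ max w⁻¹[0, a]`. Passing to `σ'` moves the value `i` from
position `j` to `j'`, so `max σ'⁻¹[0, i] = j' < j` and `(i j) ≰ σ'`, while `(i j) ≤ σ` because
`σ i ≥ j`. The smoothness equivalence is then a count, once `ℓ(w) ≤ #{t ≤ w}` is known for every
`w`; that inequality follows by induction on length from the same step, applied to `w` or `w⁻¹`
at the least point moved by `w`.
-/

namespace SmoothPerm

variable {n : ℕ}

/-- Bruhat order on `S_n`, via the standard counting criterion. -/
def bruhatLE (τ σ : Equiv.Perm (Fin n)) : Prop :=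
  ∀ i j : Fin n,
    (Finset.univ.filter (fun x => x ≤ i ∧ σ x ≤ j)).card ≤
      (Finset.univ.filter (fun x => x ≤ i ∧ τ x ≤ j)).card

/-- Number of inversions (the length ℓ(σ)). -/
def invNum (σ : Equiv.Perm (Fin n)) : ℕ :=
  (Finset.univ.filter (fun p : Fin n × Fin n => p.1 < p.2 ∧ σ p.2 < σ p.1)).card

def isTransposition (τ : Equiv.Perm (Fin n)) : Prop :=
  ∃ i j : Fin n, i < j ∧ τ = Equiv.swap i j

/-- σ is smooth iff ℓ(σ) equals the number of transpositions Bruhat-below σ. -/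
def smooth (σ : Equiv.Perm (Fin n)) : Prop :=
  invNum σ = Nat.card {τ : Equiv.Perm (Fin n) // isTransposition τ ∧ bruhatLE τ σ}

def avoids4231 (σ : Equiv.Perm (Fin n)) : Prop :=
  ¬ ∃ a b c d : Fin n, a < b ∧ b < c ∧ c < d ∧ σ d < σ b ∧ σ b < σ c ∧ σ c < σ a

/-- covexillary = 3412-avoiding. -/
def covexillary (σ : Equiv.Perm (Fin n)) : Prop :=
  ¬ ∃ a b c d : Fin n, a < b ∧ b < c ∧ c < d ∧ σ c < σ d ∧ σ d < σ a ∧ σ a < σ b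

def avoids321 (σ : Equiv.Perm (Fin n)) : Prop :=
  ¬ ∃ a b c : Fin n, a < b ∧ b < c ∧ σ c < σ b ∧ σ b < σ a

/-- The 3-cycle i ↦ j ↦ k ↦ i. -/
def Rc (i j k : Fin n) : Equiv.Perm (Fin n) := Equiv.swap i k * Equiv.swap i j

def Lc (i j k : Fin n) : Equiv.Perm (Fin n) := (Rc i j k)⁻¹

def inC23 (τ : Equiv.Perm (Fin n)) : Prop :=
  isTransposition τ ∨ ∃ i j k : Fin n, i < j ∧ j < k ∧ (τ = Rc i j k ∨ τ = Lc i j k)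

/-- The 2-3-table of σ. -/
def Ctab (σ : Equiv.Perm (Fin n)) : Set (Equiv.Perm (Fin n)) :=
  {τ | inC23 τ ∧ bruhatLE τ σ}

def admissible (A : Set (Equiv.Perm (Fin n))) : Prop :=
  (∀ τ ∈ A, inC23 τ) ∧
  (∀ σ ∈ A, ∀ τ : Equiv.Perm (Fin n), inC23 τ → bruhatLE τ σ → τ ∈ A) ∧
  (∀ i j k l : Fin n, i < j → j < l → i < k → k < l →
    Rc i j l ∈ A → Lc i k l ∈ A → Equiv.swap i l ∈ A) ∧
  (∀ i j k : Fin n, i < j → j < k →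
    Equiv.swap i j ∈ A → Equiv.swap j k ∈ A → (Rc i j k ∈ A ∨ Lc i j k ∈ A))

def isWedge (A : Set (Equiv.Perm (Fin n))) (i j : Fin n) : Prop :=
  i < j ∧ Equiv.swap i j ∈ A ∧
  (∀ i' : Fin n, (i' : ℕ) + 1 = (i : ℕ) → Equiv.swap i' i ∉ A) ∧
  (∀ j' : Fin n, (j : ℕ) + 1 = (j' : ℕ) → Rc i j j' ∉ A)

def derivedSet (A : Set (Equiv.Perm (Fin n))) (i j : Fin n) : Set (Equiv.Perm (Fin n)) :=
  A \ ({Equiv.swap i j} ∪ {τ | ∃ k, j < k ∧ τ = Lc i j k} ∪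
       {τ | ∃ k, i < k ∧ k < j ∧ τ = Rc i k j})

def strictTotalOn (S : Set (Equiv.Perm (Fin n)))
    (r : Equiv.Perm (Fin n) → Equiv.Perm (Fin n) → Prop) : Prop :=
  (∀ x ∈ S, ¬ r x x) ∧
  (∀ x ∈ S, ∀ y ∈ S, ∀ z ∈ S, r x y → r y z → r x z) ∧
  (∀ x ∈ S, ∀ y ∈ S, x ≠ y → r x y ∨ r y x)

def compatibleOrder (A : Set (Equiv.Perm (Fin n)))
    (r : Equiv.Perm (Fin n) → Equiv.Perm (Fin n) → Prop) : Prop :=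
  (∀ i j k : Fin n, i < j → j < k → Rc i j k ∈ A → Lc i j k ∉ A →
    r (Equiv.swap i j) (Equiv.swap j k)) ∧
  (∀ i j k : Fin n, i < j → j < k → Lc i j k ∈ A → Rc i j k ∉ A →
    r (Equiv.swap j k) (Equiv.swap i j)) ∧
  (∀ i j k : Fin n, i < j → j < k → Equiv.swap i k ∈ A →
    ((r (Equiv.swap i j) (Equiv.swap i k) ∧ r (Equiv.swap i k) (Equiv.swap j k)) ∨
     (r (Equiv.swap j k) (Equiv.swap i k) ∧ r (Equiv.swap i k) (Equiv.swap i j))))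

def coversIn (S : Set (Equiv.Perm (Fin n)))
    (r : Equiv.Perm (Fin n) → Equiv.Perm (Fin n) → Prop)
    (x y : Equiv.Perm (Fin n)) : Prop :=
  x ∈ S ∧ y ∈ S ∧ r x y ∧ ∀ z ∈ S, ¬ (r x z ∧ r z y)

/-- m_σ(i) = max σ([i]). -/
def maxS (σ : Equiv.Perm (Fin n)) (i : Fin n) : Fin n :=
  ((Finset.univ.filter (fun x => x ≤ i)).image (fun x => σ x)).max'
    ⟨σ i, Finset.mem_image_of_mem _ (by simp)⟩

/-- The cyclic shift i → i+1 → ⋯ → j → i. -/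
def Rseg (i j : Fin n) : Equiv.Perm (Fin n) :=
  ((List.finRange n).filter (fun x => decide (i ≤ x ∧ x ≤ j))).formPerm

def definedByInclusions (σ : Equiv.Perm (Fin n)) : Prop :=
  ∀ τ : Equiv.Perm (Fin n),
    (∀ x, maxS τ x ≤ maxS σ x) → (∀ x, maxS τ⁻¹ x ≤ maxS σ⁻¹ x) → bruhatLE τ σ

def rk (σ : Equiv.Perm (Fin n)) (p q : Fin n) : ℕ :=
  (Finset.univ.filter (fun x => x ≤ p ∧ σ x ≤ q)).card

theorem bruhatLE_iff_rk {τ σ : Equiv.Perm (Fin n)} :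
    bruhatLE τ σ ↔ ∀ p q, rk σ p q ≤ rk τ p q := Iff.rfl

theorem bruhatLE_trans {ρ τ σ : Equiv.Perm (Fin n)} (h₁ : bruhatLE ρ τ) (h₂ : bruhatLE τ σ) :
    bruhatLE ρ σ := fun p q => (h₂ p q).trans (h₁ p q)

theorem rk_eq_card_filter_Iic (σ : Equiv.Perm (Fin n)) (p q : Fin n) :
    rk σ p q = ((Finset.Iic p).filter (fun x => σ x ≤ q)).card := by
  rw [rk]; congr 1; ext; simp

theorem rk_le (σ : Equiv.Perm (Fin n)) (p q : Fin n) : rk σ p q ≤ p + 1 := by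
  rw [rk_eq_card_filter_Iic, ← Fin.card_Iic]
  exact Finset.card_filter_le _ _

theorem rk_eq_iff_forall_le (σ : Equiv.Perm (Fin n)) (p q : Fin n) :
    rk σ p q = p + 1 ↔ ∀ x ≤ p, σ x ≤ q := by
  simp only [rk_eq_card_filter_Iic, ← Fin.card_Iic, Finset.card_filter_eq_iff, Finset.mem_Iic]

theorem rk_inv (σ : Equiv.Perm (Fin n)) (p q : Fin n) : rk σ⁻¹ q p = rk σ p q :=
  (Finset.card_equiv σ fun x => by simp [and_comm]).symm

theorem rk_mul_of_iff_le {σ π : Equiv.Perm (Fin n)} {p : Fin n} (hπ : ∀ x, π x ≤ p ↔ x ≤ p)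
    (q : Fin n) : rk (σ * π) p q = rk σ p q :=
  Finset.card_equiv π fun x => by
    rw [Finset.mem_filter, Finset.mem_filter, hπ]; simp

theorem bruhatLE_inv_iff {τ σ : Equiv.Perm (Fin n)} : bruhatLE τ⁻¹ σ⁻¹ ↔ bruhatLE τ σ := by
  simp only [bruhatLE_iff_rk, rk_inv]
  exact forall_comm

theorem rk_le_min (σ : Equiv.Perm (Fin n)) (p q : Fin n) : rk σ p q ≤ min (p : ℕ) q + 1 := by
  have := rk_le σ p q
  have := rk_le σ⁻¹ q p
  rw [rk_inv] at this
  omega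

theorem maxS_le_iff {σ : Equiv.Perm (Fin n)} {a q : Fin n} :
    maxS σ a ≤ q ↔ ∀ x ≤ a, σ x ≤ q :=
  ⟨fun h x hx => (Finset.le_max' _ _ (Finset.mem_image_of_mem _ (by simp [hx]))).trans h,
    fun h => Finset.max'_le _ _ _ (by simpa using h)⟩

theorem le_maxS (σ : Equiv.Perm (Fin n)) {a x : Fin n} (h : x ≤ a) : σ x ≤ maxS σ a :=
  maxS_le_iff.1 le_rfl x h

theorem maxS_mono (σ : Equiv.Perm (Fin n)) {a a' : Fin n} (h : a ≤ a') : maxS σ a ≤ maxS σ a' :=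
  maxS_le_iff.2 fun _ hx => le_maxS σ (hx.trans h)

theorem rk_le_of_lt_maxS {σ : Equiv.Perm (Fin n)} {p q : Fin n} (h : q < maxS σ p) :
    rk σ p q ≤ p := by
  have hne : rk σ p q ≠ p + 1 := fun hfull =>
    absurd (maxS_le_iff.2 ((rk_eq_iff_forall_le σ p q).1 hfull)) (not_le.2 h)
  have := rk_le σ p q
  omega

theorem rk_swap_comm (a b p q : Fin n) : rk (Equiv.swap a b) p q = rk (Equiv.swap a b) q p := by
  rw [← rk_inv, Equiv.swap_inv]

theorem rk_swap_le_min {a b p q : Fin n} (hap : a ≤ p) (haq : a ≤ q) (hpb : p < b)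
    (hqb : q < b) : rk (Equiv.swap a b) p q ≤ min (p : ℕ) q := by
  wlog hpq : p ≤ q generalizing p q
  · rw [rk_swap_comm, min_comm]
    exact this haq hap hqb hpb (le_of_not_ge hpq)
  have : rk (Equiv.swap a b) p q ≤ p :=
    rk_le_of_lt_maxS (hqb.trans_le ((Equiv.swap_apply_left a b).symm.trans_le (le_maxS _ hap)))
  have : (p : ℕ) ≤ q := hpq
  omega

theorem min_le_rk_swap {a b : Fin n} (hab : a < b) (p q : Fin n) :
    min (p : ℕ) q ≤ rk (Equiv.swap a b) p q := by
  wlog hpq : p ≤ q generalizing p q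
  · rw [rk_swap_comm, min_comm]
    exact this q p (le_of_not_ge hpq)
  have hsub : (Finset.Iic p).erase a ⊆ (Finset.Iic p).filter (fun x => Equiv.swap a b x ≤ q) := by
    intro x hx
    rw [Finset.mem_erase, Finset.mem_Iic] at hx
    rw [Finset.mem_filter, Finset.mem_Iic, Equiv.swap_apply_def, if_neg hx.1]
    split_ifs with hxb
    · exact ⟨hx.2, hab.le.trans ((hxb ▸ hx.2).trans hpq)⟩
    · exact ⟨hx.2, hx.2.trans hpq⟩
  have := (Finset.pred_card_le_card_erase (s := Finset.Iic p) (a := a)).trans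
    (Finset.card_le_card hsub)
  rw [Fin.card_Iic, ← rk_eq_card_filter_Iic] at this
  have : (p : ℕ) ≤ q := hpq
  omega

theorem rk_swap_of_not_box {a b p q : Fin n} (hab : a < b)
    (h : ¬(a ≤ p ∧ p < b ∧ a ≤ q ∧ q < b)) :
    rk (Equiv.swap a b) p q = min (p : ℕ) q + 1 := by
  wlog hpq : p ≤ q generalizing p q
  · rw [rk_swap_comm, min_comm]
    exact this (by tauto) (le_of_not_ge hpq)
  rw [min_eq_left (show (p : ℕ) ≤ q from hpq), rk_eq_iff_forall_le]
  intro x hx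
  rw [Equiv.swap_apply_def]
  simp only [Fin.le_def, Fin.lt_def, Fin.ext_iff] at *
  split_ifs <;> omega

theorem le_maxS_of_swap_bruhatLE {σ : Equiv.Perm (Fin n)} {a b : Fin n} (hab : a < b)
    (h : bruhatLE (Equiv.swap a b) σ) : b ≤ maxS σ a := by
  by_contra! hlt
  have hfull : rk σ a (a ⊔ maxS σ a) = a + 1 :=
    (rk_eq_iff_forall_le _ _ _).2 fun x hx => (le_maxS σ hx).trans le_sup_right
  have := rk_swap_le_min le_rfl le_sup_left hab (sup_lt_iff.2 ⟨hab, hlt⟩)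
  have := bruhatLE_iff_rk.1 h a (a ⊔ maxS σ a)
  omega

theorem swap_bruhatLE_iff {σ : Equiv.Perm (Fin n)} {a b : Fin n} (hab : a < b) :
    bruhatLE (Equiv.swap a b) σ ↔ b ≤ maxS σ a ∧ b ≤ maxS σ⁻¹ a := by
  refine ⟨fun h => ⟨le_maxS_of_swap_bruhatLE hab h, le_maxS_of_swap_bruhatLE hab ?_⟩,
    fun ⟨h₁, h₂⟩ => bruhatLE_iff_rk.2 fun p q => ?_⟩
  · simpa only [Equiv.swap_inv] using bruhatLE_inv_iff.2 h
  by_cases hbox : a ≤ p ∧ p < b ∧ a ≤ q ∧ q < b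
  · obtain ⟨hap, hpb, haq, hqb⟩ := hbox
    have hp := rk_le_of_lt_maxS (hqb.trans_le (h₁.trans (maxS_mono σ hap)))
    have hq := rk_le_of_lt_maxS (hpb.trans_le (h₂.trans (maxS_mono σ⁻¹ haq)))
    rw [rk_inv] at hq
    exact (le_min hp hq).trans (min_le_rk_swap hab p q)
  · rw [rk_swap_of_not_box hab hbox]
    exact rk_le_min σ p q

theorem invNum_inv (σ : Equiv.Perm (Fin n)) : invNum σ⁻¹ = invNum σ :=
  (Finset.card_equiv ((Equiv.prodComm _ _).trans (σ.prodCongr σ)) fun p => by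
    simp [and_comm]).symm

theorem invNum_one : invNum (1 : Equiv.Perm (Fin n)) = 0 :=
  Finset.card_eq_zero.2 (Finset.filter_eq_empty_iff.2 fun _ _ h => h.1.not_gt h.2)

section AdjacentSwap

variable {σ : Equiv.Perm (Fin n)} {k' k : Fin n}

theorem swap_lt_swap_iff (hk : (k' : ℕ) + 1 = k) {x y : Fin n} (hxy : ¬(x = k' ∧ y = k))
    (hyx : ¬(x = k ∧ y = k')) : Equiv.swap k' k x < Equiv.swap k' k y ↔ x < y := by
  simp only [Equiv.swap_apply_def, Fin.lt_def, Fin.ext_iff] at *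
  split_ifs <;> omega

theorem swap_le_iff_of_le (hk : (k' : ℕ) + 1 = k) {p : Fin n} (hkp : k ≤ p) (x : Fin n) :
    Equiv.swap k' k x ≤ p ↔ x ≤ p := by
  simp only [Equiv.swap_apply_def, Fin.le_def, Fin.ext_iff] at *
  split_ifs <;> omega

theorem mul_swap_bruhatLE (hk : (k' : ℕ) + 1 = k) (hd : σ k < σ k') :
    bruhatLE (σ * Equiv.swap k' k) σ := by
  refine bruhatLE_iff_rk.2 fun p q => ?_
  by_cases hkp : k ≤ p
  · rw [rk_mul_of_iff_le (swap_le_iff_of_le hk hkp)]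
  refine Finset.card_le_card fun x hx => ?_
  rw [Finset.mem_filter] at hx ⊢
  refine ⟨Finset.mem_univ x, hx.2.1, ?_⟩
  replace hx := hx.2
  rw [Equiv.Perm.mul_apply]
  have hxk : x ≠ k := fun h => hkp (h ▸ hx.1)
  rcases eq_or_ne x k' with rfl | hxk'
  · rw [Equiv.swap_apply_left]
    exact hd.le.trans hx.2
  · rw [Equiv.swap_apply_of_ne_of_ne hxk' hxk]
    exact hx.2

theorem invNum_mul_swap (hk : (k' : ℕ) + 1 = k) (hd : σ k < σ k') :
    invNum σ = invNum (σ * Equiv.swap k' k) + 1 := by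
  set s := Equiv.swap k' k
  have hre : invNum (σ * s) =
      (Finset.univ.filter fun q : Fin n × Fin n => s q.1 < s q.2 ∧ σ q.2 < σ q.1).card :=
    Finset.card_equiv (s.prodCongr s) fun q => by
      rw [Finset.mem_filter, Finset.mem_filter]; simp [s]
  have hk'k : k' < k := by rw [Fin.lt_def]; omega
  have hnot : (k', k) ∉
      Finset.univ.filter fun q : Fin n × Fin n => s q.1 < s q.2 ∧ σ q.2 < σ q.1 := by
    simp [s, hk'k.not_gt]
  rw [hre, ← Finset.card_insert_of_notMem hnot, invNum]
  congr 1
  ext ⟨x, y⟩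
  simp only [Finset.mem_filter, Finset.mem_univ, true_and, Finset.mem_insert, Prod.mk.injEq]
  by_cases hxy : x = k' ∧ y = k
  · obtain ⟨rfl, rfl⟩ := hxy
    simp [hk'k, hd]
  by_cases hyx : x = k ∧ y = k'
  · obtain ⟨rfl, rfl⟩ := hyx
    simp [hk'k.not_gt, hk'k.ne', hd.le]
  rw [swap_lt_swap_iff hk hxy hyx]
  tauto

end AdjacentSwap

def transpositionsBelow (σ : Equiv.Perm (Fin n)) : Set (Equiv.Perm (Fin n)) :=
  {τ | isTransposition τ ∧ bruhatLE τ σ}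

theorem smooth_iff_ncard (σ : Equiv.Perm (Fin n)) :
    smooth σ ↔ invNum σ = (transpositionsBelow σ).ncard := by
  rw [smooth, ← Nat.card_coe_set_eq]
  rfl

theorem transpositionsBelow_mono {τ σ : Equiv.Perm (Fin n)} (h : bruhatLE τ σ) :
    transpositionsBelow τ ⊆ transpositionsBelow σ :=
  fun _ hρ => ⟨hρ.1, bruhatLE_trans hρ.2 h⟩

theorem transpositionsBelow_inv (σ : Equiv.Perm (Fin n)) :
    transpositionsBelow σ⁻¹ = transpositionsBelow σ := by
  ext τ
  refine and_congr_right fun ⟨a, b, _, hτ⟩ => ?_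
  rw [← bruhatLE_inv_iff, hτ, Equiv.swap_inv, inv_inv]

section Step

variable {σ : Equiv.Perm (Fin n)} {i j j' : Fin n}

theorem apply_lt_iff_of_mapsTo (hfix : ∀ x, x < i → σ x < i) (x : Fin n) :
    σ x < i ↔ x < i := by
  refine ⟨fun hx => ?_, hfix x⟩
  have hbij := ((Set.finite_Iio i).injOn_iff_bijOn_of_mapsTo fun y hy => hfix y hy).1
    σ.injective.injOn
  obtain ⟨y, hy, hyx⟩ := hbij.surjOn hx
  exact σ.injective hyx ▸ hy

theorem lt_apply_pred (hfix : ∀ x, x < i → σ x < i) (hij : i < j) (hσj : σ j = i)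
    (hj' : (j' : ℕ) + 1 = j) : i < σ j' := by
  have hne : σ j' ≠ i := hσj ▸ σ.injective.ne (Fin.ne_of_val_ne (by omega))
  refine lt_of_not_ge fun h => ?_
  have := (apply_lt_iff_of_mapsTo hfix j').1 (h.lt_of_ne hne)
  rw [Fin.lt_def] at this hij
  omega

theorem swap_bruhatLE_of_le_apply (hij : i < j) (hσj : σ j = i) (hsi : j ≤ σ i) :
    bruhatLE (Equiv.swap i j) σ := by
  have hinv : σ⁻¹ i = j := Equiv.Perm.inv_eq_iff_eq.2 hσj.symm
  exact (swap_bruhatLE_iff hij).2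
    ⟨hsi.trans (le_maxS σ le_rfl), hinv.symm.trans_le (le_maxS σ⁻¹ le_rfl)⟩

theorem not_swap_bruhatLE_mul_swap (hfix : ∀ x, x < i → σ x < i) (hij : i < j)
    (hσj : σ j = i) (hj' : (j' : ℕ) + 1 = j) :
    ¬ bruhatLE (Equiv.swap i j) (σ * Equiv.swap j' j) := by
  rw [swap_bruhatLE_iff hij]
  rintro ⟨-, h⟩
  have hmax : maxS (σ * Equiv.swap j' j)⁻¹ i ≤ j' := maxS_le_iff.2 fun y hy => by
    rw [mul_inv_rev, Equiv.swap_inv, Equiv.Perm.mul_apply]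
    rcases hy.lt_or_eq with hy | rfl
    · have := (apply_lt_iff_of_mapsTo hfix (σ⁻¹ y)).1 (by simpa using hy)
      rw [Equiv.swap_apply_of_ne_of_ne (Fin.ne_of_val_ne (by omega))
        (Fin.ne_of_val_ne (by omega))]
      exact Fin.le_def.2 (by omega)
    · rw [Equiv.Perm.inv_eq_iff_eq.2 hσj.symm, Equiv.swap_apply_right]
  have := Fin.le_def.1 (h.trans hmax)
  omega

theorem transpositionsBelow_mul_swap_ssubset
    (hfix : ∀ x, x < i → σ x < i) (hij : i < j) (hσj : σ j = i) (hsi : j ≤ σ i)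
    (hj' : (j' : ℕ) + 1 = j) :
    transpositionsBelow (σ * Equiv.swap j' j) ⊂ transpositionsBelow σ := by
  have hd : σ j < σ j' := hσj ▸ lt_apply_pred hfix hij hσj hj'
  refine (Set.ssubset_iff_of_subset (transpositionsBelow_mono (mul_swap_bruhatLE hj' hd))).2
    ⟨Equiv.swap i j, ⟨⟨i, j, hij, rfl⟩, swap_bruhatLE_of_le_apply hij hσj hsi⟩,
      fun h => not_swap_bruhatLE_mul_swap hfix hij hσj hj' h.2⟩

end Step

theorem lt_apply_of_mem_support {ρ : Equiv.Perm (Fin n)} {i : Fin n}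
    (hmin : ∀ x ∈ ρ.support, i ≤ x) (hi : i ∈ ρ.support) : i < ρ i :=
  lt_of_le_of_ne (hmin _ (Equiv.Perm.apply_mem_support.2 hi)) (Equiv.Perm.mem_support.1 hi).symm

theorem exists_step_of_inv_apply_le {ρ : Equiv.Perm (Fin n)} {i : Fin n}
    (hmin : ∀ x ∈ ρ.support, i ≤ x) (hi : i ∈ ρ.support) (hle : ρ⁻¹ i ≤ ρ i) :
    ∃ j j' : Fin n, (∀ x, x < i → ρ x < i) ∧ i < j ∧ ρ j = i ∧ j ≤ ρ i ∧
      (j' : ℕ) + 1 = j := by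
  have hij : i < ρ⁻¹ i :=
    lt_apply_of_mem_support (by rwa [Equiv.Perm.support_inv]) (by rwa [Equiv.Perm.support_inv])
  refine ⟨ρ⁻¹ i, ⟨(ρ⁻¹ i : ℕ) - 1, by omega⟩, fun x hx => ?_, hij, by simp, hle, ?_⟩
  · rwa [Equiv.Perm.notMem_support.1 fun h => (hmin x h).not_gt hx]
  · rw [Fin.lt_def] at hij
    simp only
    omega

theorem exists_step (σ : Equiv.Perm (Fin n)) (hσ : σ ≠ 1) :
    ∃ ρ, (ρ = σ ∨ ρ = σ⁻¹) ∧ ∃ i j j' : Fin n, (∀ x, x < i → ρ x < i) ∧ i < j ∧ ρ j = i ∧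
      j ≤ ρ i ∧ (j' : ℕ) + 1 = j := by
  have hne : σ.support.Nonempty :=
    Finset.nonempty_iff_ne_empty.2 (mt Equiv.Perm.support_eq_empty_iff.1 hσ)
  obtain ⟨i, hi, hmin⟩ : ∃ i ∈ σ.support, ∀ x ∈ σ.support, i ≤ x :=
    ⟨_, σ.support.min'_mem hne, fun x hx => σ.support.min'_le x hx⟩
  rcases le_total (σ⁻¹ i) (σ i) with h | h
  · exact ⟨σ, .inl rfl, _, exists_step_of_inv_apply_le hmin hi h⟩
  · rw [← Equiv.Perm.support_inv] at hmin hi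
    exact ⟨σ⁻¹, .inr rfl, _, exists_step_of_inv_apply_le hmin hi (by rwa [inv_inv])⟩

theorem invNum_le_ncard_transpositionsBelow (σ : Equiv.Perm (Fin n)) :
    invNum σ ≤ (transpositionsBelow σ).ncard := by
  obtain rfl | hσ := eq_or_ne σ 1
  · rw [invNum_one]
    exact Nat.zero_le _
  obtain ⟨ρ, hρ, i, j, j', hfix, hij, hρj, hsi, hj'⟩ := exists_step σ hσ
  have hρσ : invNum ρ = invNum σ ∧ transpositionsBelow ρ = transpositionsBelow σ := by
    rcases hρ with rfl | rfl
    · exact ⟨rfl, rfl⟩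
    · exact ⟨invNum_inv σ, transpositionsBelow_inv σ⟩
  have hlen := invNum_mul_swap hj' (hρj ▸ lt_apply_pred hfix hij hρj hj')
  have ih := invNum_le_ncard_transpositionsBelow (ρ * Equiv.swap j' j)
  have hlt := Set.ncard_lt_ncard (transpositionsBelow_mul_swap_ssubset hfix hij hρj hsi hj')
  rw [hρσ.2] at hlt
  omega
termination_by invNum σ
decreasing_by omega

theorem smooth_iff_of_invNum_eq_succ {σ σ' t : Equiv.Perm (Fin n)}
    (hlen : invNum σ = invNum σ' + 1) (hsub : transpositionsBelow σ' ⊆ transpositionsBelow σ)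
    (ht : t ∈ transpositionsBelow σ) (ht' : t ∉ transpositionsBelow σ') :
    smooth σ ↔ smooth σ' ∧ transpositionsBelow σ = insert t (transpositionsBelow σ') := by
  have hins : insert t (transpositionsBelow σ') ⊆ transpositionsBelow σ :=
    Set.insert_subset ht hsub
  have hcard := Set.ncard_insert_of_notMem ht' (Set.toFinite _)
  have hle := invNum_le_ncard_transpositionsBelow σ'
  rw [smooth_iff_ncard, smooth_iff_ncard]
  constructor
  · intro h
    have := Set.ncard_le_ncard hins (Set.toFinite _)
    exact ⟨by omega, (Set.eq_of_subset_of_ncard_le hins (by omega) (Set.toFinite _)).symm⟩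
  · rintro ⟨h, heq⟩
    rw [heq, hcard]
    omega

theorem smooth_induction_step (n : ℕ) (σ : Equiv.Perm (Fin n)) (i j j' : Fin n)
    (hfix : ∀ x, x < i → σ x < i)
    (hij : i < j) (hinv : σ⁻¹ i = j) (hsi : j ≤ σ i)
    (hj' : (j' : ℕ) + 1 = (j : ℕ)) :
    (∀ τ, isTransposition τ → bruhatLE τ (σ * Equiv.swap j' j) → bruhatLE τ σ) ∧
    (bruhatLE (Equiv.swap i j) σ ∧ ¬ bruhatLE (Equiv.swap i j) (σ * Equiv.swap j' j)) ∧
    (smooth σ ↔ (smooth (σ * Equiv.swap j' j) ∧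
      ∀ τ, isTransposition τ →
        (bruhatLE τ σ ↔ (bruhatLE τ (σ * Equiv.swap j' j) ∨ τ = Equiv.swap i j)))) := by
  have hσj : σ j = i := by rw [← hinv]; simp
  have hd : σ j < σ j' := hσj ▸ lt_apply_pred hfix hij hσj hj'
  have hle := mul_swap_bruhatLE hj' hd
  have ht := swap_bruhatLE_of_le_apply hij hσj hsi
  have ht' := not_swap_bruhatLE_mul_swap hfix hij hσj hj'
  have htrans : isTransposition (Equiv.swap i j) := ⟨i, j, hij, rfl⟩
  refine ⟨fun τ _ h => bruhatLE_trans h hle, ⟨ht, ht'⟩, ?_⟩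
  rw [smooth_iff_of_invNum_eq_succ (invNum_mul_swap hj' hd) (transpositionsBelow_mono hle)
    ⟨htrans, ht⟩ fun h => ht' h.2, Set.ext_iff]
  refine and_congr_right fun _ => forall_congr' fun τ => ?_
  simp only [transpositionsBelow, Set.mem_insert_iff, Set.mem_ofPred_eq]
  by_cases hτ : τ = Equiv.swap i j
  · subst hτ
    simp only [htrans, ht, true_or, true_and, or_true, implies_true]
  · simp only [hτ, false_or, or_false]
    tauto

end SmoothPerm
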